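/- Let a, b, c be positive integers. The expected value of the bottom-left corner entry T(a,1) of a uniformly random plane partition T in an a×b×c box equals b·c/(a+b); equivalently, (a+b) · Σ_T T(a,1) = b·c · N(a,b,c), the sum being over all plane partitions T in the a×b×c box. -/

import Mathlib

open Finset

/-- Plane partitions in an `a × b × c` box: assignments of entries in `{0, …, c}` to the
cells of an `a × b` rectangle with weakly decreasing rows and columns. -/
def PlanePartitions (a b c : ℕ) : Finset (Fin a → Fin b → Fin (c + 1)) :=
  univ.filter (fun T =>
    (∀ i : Fin a, ∀ j j' : Fin b, j ≤ j' → T i j' ≤ T i j) ∧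
    (∀ i i' : Fin a, ∀ j : Fin b, i ≤ i' → T i' j ≤ T i j))

/-- The entry `T(i, j)` of a plane partition at the 1-based cell `(i, j)`. -/
def entry (a b c : ℕ) (T : Fin a → Fin b → Fin (c + 1)) (i j : ℕ) : ℕ :=
  if h : 1 ≤ i ∧ i ≤ a ∧ 1 ≤ j ∧ j ≤ b then
    (T ⟨i - 1, by omega⟩ ⟨j - 1, by omega⟩ : ℕ)
  else 0

/-- `E a b c i j` is the expected value of the entry at the 1-based cell `(i, j)` of a
uniformly random plane partition in an `a × b × c` box. -/
def E (a b c i j : ℕ) : ℚ :=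
  (∑ T ∈ PlanePartitions a b c, (entry a b c T i j : ℚ))
    / ((PlanePartitions a b c).card : ℚ)

/-!
For each level `k`, the cells with entry `≥ k` form a Young diagram in the `a × b` rectangle. Its
boundary is a lattice path of `a + b` unit steps descending from height `a` to `0`, so exactly `b`
of its steps are flat: over all levels and all plane partitions there are `b c N` flat steps.
Rewriting the entries on one diagonal by a Bender–Knuth type toggle (reflect each run of levels on
which the two neighbouring heights agree, and swap the two possible middle heights) is an
involution of the plane partitions that exchanges the flat steps at positions `m` and `m + 1`.
Hence each of the `a + b` positions carries `b c N / (a + b)` flat steps, and a flat first step at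
level `k` means exactly `k ≤ T(a, 1)`.
-/

lemma Fin.antitone_of_succ_le {n : ℕ} {α : Type*} [Preorder α] {f : Fin n → α}
    (h : ∀ (j : ℕ) (hj : j + 1 < n), f ⟨j + 1, hj⟩ ≤ f ⟨j, by omega⟩) :
    Antitone f := by
  cases n with
  | zero => exact fun i => i.elim0
  | succ n => exact Fin.antitone_iff_succ_le.2 fun i => h i (by simp)

lemma Antitone.iff_lt_card_filter {n : ℕ} {P : Fin n → Prop} [DecidablePred P]
    (hP : Antitone P) (i : Fin n) : P i ↔ (i : ℕ) < #{i | P i} := by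
  constructor
  · intro hi
    have hsub : Iic i ⊆ ({i | P i} : Finset (Fin n)) := fun x hx =>
      mem_filter.2 ⟨mem_univ x, hP (mem_Iic.1 hx) hi⟩
    have := card_le_card hsub
    rw [Fin.card_Iic] at this
    omega
  · intro hi
    by_contra hni
    have hsub : ({i | P i} : Finset (Fin n)) ⊆ Iio i := fun x hx =>
      mem_Iio.2 (lt_of_not_ge fun hix => hni (hP hix (mem_filter.1 hx).2))
    have := card_le_card hsub
    rw [Fin.card_Iio] at this
    omega

lemma AntitoneOn.iff_le_card_filter {c k : ℕ} {P : ℕ → Prop} [DecidablePred P]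
    (hP : AntitoneOn P (Icc 1 c)) (hk : k ∈ Icc 1 c) : P k ↔ k ≤ #{k ∈ Icc 1 c | P k} := by
  have hk' := mem_Icc.1 hk
  constructor
  · intro hPk
    have hsub : Icc 1 k ⊆ {k ∈ Icc 1 c | P k} := fun x hx => by
      have hx' := mem_Icc.1 hx
      have hxc : x ∈ Icc 1 c := mem_Icc.2 ⟨hx'.1, hx'.2.trans hk'.2⟩
      exact mem_filter.2 ⟨hxc, hP hxc hk hx'.2 hPk⟩
    have := card_le_card hsub
    rw [Nat.card_Icc] at this
    omega
  · intro hkc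
    by_contra hnk
    have hsub : {k ∈ Icc 1 c | P k} ⊆ Icc 1 (k - 1) := fun x hx => by
      have hx' := mem_filter.1 hx
      have hxk : x < k := lt_of_not_ge fun hkx => hnk (hP hk hx'.1 hkx hx'.2)
      exact mem_Icc.2 ⟨(mem_Icc.1 hx'.1).1, by omega⟩
    have := card_le_card hsub
    rw [Nat.card_Icc] at this
    omega

lemma Fin.val_eq_card_filter_le {c : ℕ} (x : Fin (c + 1)) :
    (x : ℕ) = #{k ∈ Icc 1 c | k ≤ (x : ℕ)} := by
  have hx := x.is_lt
  have : {k ∈ Icc 1 c | k ≤ (x : ℕ)} = Icc 1 (x : ℕ) := by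
    ext k
    simp only [mem_filter, mem_Icc]
    omega
  rw [this, Nat.card_Icc, Nat.add_sub_cancel]

lemma card_filter_range_eq_apply_succ_add {f : ℕ → ℕ}
    (hf : ∀ m, f (m + 1) ≤ f m ∧ f m ≤ f (m + 1) + 1) (n : ℕ) :
    #{m ∈ range n | f m = f (m + 1)} + f 0 = n + f n := by
  induction n with
  | zero => simp
  | succ n ih =>
    rw [range_add_one, filter_insert]
    have := hf n
    split_ifs with h
    · rw [card_insert_of_notMem (by simp)]
      omega
    · omega

namespace PlanePartitions

section Toggle

variable {c : ℕ} {p q r : ℕ → ℕ} {k t : ℕ}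

def run (c : ℕ) (p r : ℕ → ℕ) (k : ℕ) : Finset ℕ :=
  insert k {t ∈ Icc 1 c | p t = p k ∧ r t = r k}

lemma run_nonempty : (run c p r k).Nonempty := insert_nonempty _ _

def reflect (c : ℕ) (p r : ℕ → ℕ) (k : ℕ) : ℕ :=
  (run c p r k).min' run_nonempty + (run c p r k).max' run_nonempty - k

/-- Where `p = r + 1`, a middle height `q` may be either `r` or `p`; elsewhere it is forced.
`toggle` swaps the two values after reflecting the run of levels on which `p` and `r` are
constant, which keeps it antitone in the level. -/
def toggle (c : ℕ) (p q r : ℕ → ℕ) (k : ℕ) : ℕ :=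
  max (p k - 1) (r k) + min (p k) (r k + 1) - q (reflect c p r k)

def Between (c : ℕ) (p q r : ℕ → ℕ) : Prop :=
  ∀ k ∈ Icc 1 c, q k ≤ p k ∧ p k ≤ q k + 1 ∧ r k ≤ q k ∧ q k ≤ r k + 1

lemma mem_run_iff (hk : k ∈ Icc 1 c) :
    t ∈ run c p r k ↔ t ∈ Icc 1 c ∧ p t = p k ∧ r t = r k := by
  rw [run, mem_insert, mem_filter]
  exact or_iff_right_of_imp (by rintro rfl; exact ⟨hk, rfl, rfl⟩)

lemma run_eq_of_mem (hk : k ∈ Icc 1 c) (ht : t ∈ run c p r k) : run c p r t = run c p r k := by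
  obtain ⟨ht, hpt, hrt⟩ := (mem_run_iff hk).1 ht
  ext s
  rw [mem_run_iff ht, mem_run_iff hk, hpt, hrt]

lemma reflect_eq_of_mem (hk : k ∈ Icc 1 c) (ht : t ∈ run c p r k) :
    reflect c p r t = (run c p r k).min' run_nonempty + (run c p r k).max' run_nonempty - t := by
  simp only [reflect, run_eq_of_mem hk ht]

lemma mem_run_of_le_of_le (hp : AntitoneOn p (Icc 1 c)) (hr : AntitoneOn r (Icc 1 c))
    (hk : k ∈ Icc 1 c) (hmin : (run c p r k).min' run_nonempty ≤ t)
    (hmax : t ≤ (run c p r k).max' run_nonempty) : t ∈ run c p r k := by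
  obtain ⟨hlo, hplo, hrlo⟩ := (mem_run_iff hk).1 (min'_mem _ run_nonempty)
  obtain ⟨hhi, hphi, hrhi⟩ := (mem_run_iff hk).1 (max'_mem _ run_nonempty)
  have ht : t ∈ Icc 1 c :=
    mem_Icc.2 ⟨(mem_Icc.1 hlo).1.trans hmin, hmax.trans (mem_Icc.1 hhi).2⟩
  refine (mem_run_iff hk).2 ⟨ht, ?_, ?_⟩
  · exact le_antisymm (hplo ▸ hp hlo ht hmin) (hphi ▸ hp ht hhi hmax)
  · exact le_antisymm (hrlo ▸ hr hlo ht hmin) (hrhi ▸ hr ht hhi hmax)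

lemma reflect_mem_run (hp : AntitoneOn p (Icc 1 c)) (hr : AntitoneOn r (Icc 1 c))
    (hk : k ∈ Icc 1 c) : reflect c p r k ∈ run c p r k := by
  have hlo := min'_le (run c p r k) k (mem_insert_self _ _)
  have hhi := le_max' (run c p r k) k (mem_insert_self _ _)
  exact mem_run_of_le_of_le hp hr hk (by unfold reflect; omega) (by unfold reflect; omega)

lemma reflect_reflect (hp : AntitoneOn p (Icc 1 c)) (hr : AntitoneOn r (Icc 1 c))
    (hk : k ∈ Icc 1 c) : reflect c p r (reflect c p r k) = k := by
  have hlo := min'_le (run c p r k) k (mem_insert_self _ _)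
  have hhi := le_max' (run c p r k) k (mem_insert_self _ _)
  rw [reflect_eq_of_mem hk (reflect_mem_run hp hr hk), reflect]
  omega

lemma Between.between_toggle (hp : AntitoneOn p (Icc 1 c)) (hr : AntitoneOn r (Icc 1 c))
    (hb : Between c p q r) : Between c p (toggle c p q r) r := by
  intro k hk
  obtain ⟨hs, hps, hrs⟩ := (mem_run_iff hk).1 (reflect_mem_run hp hr hk)
  have := hb _ hs
  rw [toggle]
  omega

lemma Between.toggle_antitoneOn (hp : AntitoneOn p (Icc 1 c)) (hq : AntitoneOn q (Icc 1 c))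
    (hr : AntitoneOn r (Icc 1 c)) (hb : Between c p q r) :
    AntitoneOn (toggle c p q r) (Icc 1 c) := by
  intro k hk k' hk' hkk'
  by_cases hsame : p k' = p k ∧ r k' = r k
  · have hk'run : k' ∈ run c p r k := (mem_run_iff hk).2 ⟨hk', hsame⟩
    obtain ⟨hs, hps, hrs⟩ := (mem_run_iff hk).1 (reflect_mem_run hp hr hk)
    have hss : reflect c p r k' ≤ reflect c p r k := by
      rw [reflect_eq_of_mem hk hk'run, reflect]
      omega
    have hs' : reflect c p r k' ∈ Icc 1 c :=
      ((mem_run_iff hk').1 (reflect_mem_run hp hr hk')).1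
    have := hq hs' hs hss
    have := hb _ hs
    simp only [toggle, hsame]
    omega
  · have := hb.between_toggle hp hr k hk
    have := hb.between_toggle hp hr k' hk'
    have := hp hk hk' hkk'
    have := hr hk hk' hkk'
    omega

lemma Between.toggle_toggle (hp : AntitoneOn p (Icc 1 c)) (hr : AntitoneOn r (Icc 1 c))
    (hb : Between c p q r) {q' : ℕ → ℕ} (hq' : ∀ k ∈ Icc 1 c, q' k = toggle c p q r k)
    (hk : k ∈ Icc 1 c) : toggle c p q' r k = q k := by
  obtain ⟨hs, hps, hrs⟩ := (mem_run_iff hk).1 (reflect_mem_run hp hr hk)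
  have := hb k hk
  rw [toggle, hq' _ hs, toggle, reflect_reflect hp hr hk, hps, hrs]
  omega

lemma Between.card_filter_eq_toggle (hp : AntitoneOn p (Icc 1 c)) (hr : AntitoneOn r (Icc 1 c))
    (hb : Between c p q r) :
    #{k ∈ Icc 1 c | p k = toggle c p q r k} = #{k ∈ Icc 1 c | q k = r k} := by
  have hmem {k} (hk : k ∈ Icc 1 c) := (mem_run_iff hk).1 (reflect_mem_run hp hr hk)
  refine card_nbij' (reflect c p r) (reflect c p r) (fun k hk => ?_) (fun k hk => ?_)
    (fun k hk => reflect_reflect hp hr (mem_filter.1 hk).1)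
    (fun k hk => reflect_reflect hp hr (mem_filter.1 hk).1)
  all_goals
    obtain ⟨hk, hkeq⟩ := mem_filter.1 hk
    obtain ⟨hs, hps, hrs⟩ := hmem hk
    have := hb _ hs
    have := hb _ hk
    refine mem_filter.2 ⟨hs, ?_⟩
    simp only [toggle, reflect_reflect hp hr hk] at hkeq ⊢
    omega

end Toggle

section Height

variable {a b c : ℕ} {T : Fin a → Fin b → Fin (c + 1)} {m k : ℕ}

lemma mem_iff : T ∈ PlanePartitions a b c ↔ (∀ i, Antitone (T i)) ∧ Antitone T := by
  simp only [PlanePartitions, mem_filter, mem_univ, true_and]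
  exact and_congr Iff.rfl ⟨fun h _ _ hii' j => h _ _ j hii', fun h _ _ j hii' => h hii' j⟩

def rowLength (T : Fin a → Fin b → Fin (c + 1)) (k : ℕ) (i : Fin a) : ℕ :=
  #{j | k ≤ (T i j : ℕ)}

/-- `height T · k` is the boundary path of the level-`k` diagram: on the diagonal of the cells
`(i, j)` with `j + a = i + m`, the entries `≥ k` are those in the rows `i < height T m k`. -/
def height (T : Fin a → Fin b → Fin (c + 1)) (m k : ℕ) : ℕ :=
  #{i : Fin a | m + i < rowLength T k i + a}

lemma rowLength_le (i : Fin a) : rowLength T k i ≤ b :=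
  (card_filter_le _ _).trans_eq (Fintype.card_fin b)

lemma rowLength_antitone (hcol : Antitone T) : Antitone (rowLength T k) := fun _ _ hii' =>
  card_le_card <| monotone_filter_right _ fun j _ hj => hj.trans (hcol hii' j)

lemma le_iff_lt_rowLength (hrow : ∀ i, Antitone (T i)) (i : Fin a) (j : Fin b) :
    k ≤ (T i j : ℕ) ↔ (j : ℕ) < rowLength T k i :=
  Antitone.iff_lt_card_filter (P := fun j => k ≤ (T i j : ℕ))
    (fun _ _ hjj' hk => hk.trans (hrow i hjj')) j

lemma height_le : height T m k ≤ a :=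
  (card_filter_le _ _).trans_eq (Fintype.card_fin a)

lemma height_zero : height T 0 k = a := by
  rw [height, filter_true_of_mem fun i _ => by have := i.is_lt; omega, card_univ,
    Fintype.card_fin]

lemma height_eq_zero (hm : a + b ≤ m) : height T m k = 0 := by
  rw [height, card_eq_zero, filter_eq_empty_iff]
  intro i _
  have := rowLength_le (T := T) (k := k) i
  omega

lemma height_antitone : Antitone (height T m) := fun _ _ hkk' =>
  card_le_card <| monotone_filter_right _ fun _ _ hi =>
    hi.trans_le (Nat.add_le_add_right (card_le_card <| monotone_filter_right _
      fun _ _ hj => hkk'.trans hj) a)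

lemma height_succ_le : height T (m + 1) k ≤ height T m k :=
  card_le_card <| monotone_filter_right _ fun _ _ hi => by omega

lemma height_le_height_succ_add_one (hcol : Antitone T) :
    height T m k ≤ height T (m + 1) k + 1 := by
  have hsub : ({i | m + i < rowLength T k i + a} : Finset (Fin a)) ⊆
      ({i | m + 1 + i < rowLength T k i + a} : Finset (Fin a)) ∪
        ({i | m + i + 1 = rowLength T k i + a} : Finset (Fin a)) :=
    fun i hi => by simp only [mem_union, mem_filter, mem_univ, true_and] at hi ⊢; omega
  -- `i ↦ rowLength T k i - i` is strictly decreasing, so at most one row lands on `m + 1 - a`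
  have hunique : #({i | m + i + 1 = rowLength T k i + a} : Finset (Fin a)) ≤ 1 := by
    refine card_le_one.2 fun i hi i' hi' => ?_
    simp only [mem_filter, mem_univ, true_and] at hi hi'
    rcases le_total i i' with h | h
    · have := rowLength_antitone (k := k) hcol h
      exact Fin.ext (by omega)
    · have := rowLength_antitone (k := k) hcol h
      exact Fin.ext (by omega)
  calc height T m k ≤ _ := card_le_card hsub
    _ ≤ _ := card_union_le _ _
    _ ≤ height T (m + 1) k + 1 := Nat.add_le_add_left hunique _

lemma le_height_add (hcol : Antitone T) : a ≤ height T m k + m := by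
  induction m with
  | zero => simp [height_zero]
  | succ m ih => have := height_le_height_succ_add_one (m := m) (k := k) hcol; omega

lemma height_add_le (hcol : Antitone T) (hm : m ≤ a + b) : height T m k + m ≤ a + b := by
  obtain ⟨n, hn⟩ := Nat.exists_eq_add_of_le hm
  induction n generalizing m with
  | zero => rw [height_eq_zero (by omega)]; omega
  | succ n ih =>
    have := ih (m := m + 1) (by omega) (by omega)
    have := height_le_height_succ_add_one (m := m) (k := k) hcol
    omega

lemma le_iff_lt_height (hrow : ∀ i, Antitone (T i)) (hcol : Antitone T) {i : Fin a} {j : Fin b}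
    (hij : (j : ℕ) + a = i + m) : k ≤ (T i j : ℕ) ↔ (i : ℕ) < height T m k := by
  have hdown : Antitone fun i : Fin a => m + i < rowLength T k i + a :=
    fun _ _ hii' hi => by have := rowLength_antitone (k := k) hcol hii'; omega
  rw [height, ← hdown.iff_lt_card_filter, le_iff_lt_rowLength hrow]
  omega

lemma mem_of_levels (H : ℕ → ℕ → ℕ)
    (hstep : ∀ m, ∀ k ∈ Icc 1 c, H (m + 1) k ≤ H m k ∧ H m k ≤ H (m + 1) k + 1)
    (hlev : ∀ (i : Fin a) (j : Fin b) m, (j : ℕ) + a = i + m →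
      ∀ k ∈ Icc 1 c, (k ≤ (T i j : ℕ) ↔ (i : ℕ) < H m k)) :
    T ∈ PlanePartitions a b c := by
  have hle {x y : Fin (c + 1)} (h : ∀ k ∈ Icc 1 c, k ≤ (x : ℕ) → k ≤ (y : ℕ)) :
      x ≤ y :=
    Fin.le_def.2 <| (Fin.val_eq_card_filter_le x).trans_le <|
      (card_le_card (monotone_filter_right _ h)).trans_eq (Fin.val_eq_card_filter_le y).symm
  refine mem_iff.2 ⟨fun i => Fin.antitone_of_succ_le fun j hj => hle fun k hk h => ?_,
    Fin.antitone_of_succ_le fun i hi j => hle fun k hk h => ?_⟩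
  · rw [hlev i ⟨j + 1, hj⟩ (j + a - i + 1) (by simp; omega) k hk] at h
    rw [hlev i ⟨j, by omega⟩ (j + a - i) (by simp; omega) k hk]
    have := hstep (j + a - i) k hk
    omega
  · rw [hlev ⟨i + 1, hi⟩ j (j + a - (i + 1)) (by simp; omega) k hk] at h
    rw [hlev ⟨i, by omega⟩ j (j + a - (i + 1) + 1) (by simp; omega) k hk]
    have := hstep (j + a - (i + 1)) k hk
    simp only at h ⊢
    omega

lemma height_eq_of_levels (hrow : ∀ i, Antitone (T i)) (hcol : Antitone T) (hm : m ≤ a + b)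
    {n : ℕ} (hn : a ≤ n + m) (hn' : n + m ≤ a + b) (hna : n ≤ a)
    (hlev : ∀ (i : Fin a) (j : Fin b), (j : ℕ) + a = i + m →
      (k ≤ (T i j : ℕ) ↔ (i : ℕ) < n)) :
    height T m k = n := by
  by_contra hne
  have h1 := le_height_add (m := m) (k := k) hcol
  have h2 := height_add_le (k := k) hcol hm
  have h3 := height_le (T := T) (m := m) (k := k)
  -- the two thresholds disagree on the row `min (height T m k) n` of the diagonal
  set x := min (height T m k) n with hx
  have hxa : x < a := by omega
  have hxb : x + m - a < b := by omega
  have := (le_iff_lt_height (m := m) hrow hcol (i := ⟨x, hxa⟩) (j := ⟨x + m - a, hxb⟩)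
    (by simp only; omega)).symm.trans (hlev _ _ (by simp only; omega))
  simp only at this
  omega

end Height

section ToggleDiag

variable {a b c : ℕ} {T : Fin a → Fin b → Fin (c + 1)} {m k : ℕ}

def toggleDiag (T : Fin a → Fin b → Fin (c + 1)) (m : ℕ) : Fin a → Fin b → Fin (c + 1) :=
  fun i j =>
    if (j : ℕ) + a = i + (m + 1) then
      ⟨#{k ∈ Icc 1 c |
          (i : ℕ) < toggle c (height T m) (height T (m + 1)) (height T (m + 2)) k},
        Nat.lt_succ_of_le <| (card_filter_le _ _).trans (by simp)⟩
    else T i j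

lemma between_height (hcol : Antitone T) :
    Between c (height T m) (height T (m + 1)) (height T (m + 2)) := fun _ _ =>
  ⟨height_succ_le, height_le_height_succ_add_one hcol, height_succ_le,
    height_le_height_succ_add_one hcol⟩

lemma toggleDiag_of_ne {i : Fin a} {j : Fin b} (h : (j : ℕ) + a ≠ i + (m + 1)) :
    toggleDiag T m i j = T i j :=
  if_neg h

lemma le_toggleDiag_iff (hcol : Antitone T) {i : Fin a} {j : Fin b}
    (h : (j : ℕ) + a = i + (m + 1)) (hk : k ∈ Icc 1 c) : k ≤ (toggleDiag T m i j : ℕ) ↔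
      (i : ℕ) < toggle c (height T m) (height T (m + 1)) (height T (m + 2)) k := by
  have hanti := (between_height (m := m) hcol).toggle_antitoneOn (height_antitone.antitoneOn _)
    (height_antitone.antitoneOn _) (height_antitone.antitoneOn _)
  rw [toggleDiag, if_pos h]
  exact (AntitoneOn.iff_le_card_filter
    (fun _ hk _ hk' hkk' hlt => hlt.trans_le (hanti hk hk' hkk')) hk).symm

lemma toggleDiag_mem (hT : T ∈ PlanePartitions a b c) :
    toggleDiag T m ∈ PlanePartitions a b c := by
  obtain ⟨hrow, hcol⟩ := mem_iff.1 hT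
  have hb := (between_height (m := m) hcol).between_toggle (height_antitone.antitoneOn _)
    (height_antitone.antitoneOn _)
  refine mem_of_levels (fun m' k => if m' = m + 1 then
      toggle c (height T m) (height T (m + 1)) (height T (m + 2)) k else height T m' k)
    (fun m' k hk => ?_) (fun i j m' hij k hk => ?_)
  · have := hb k hk
    by_cases h : m' = m + 1
    · subst h
      simp only [if_pos, show m + 1 + 1 ≠ m + 1 by omega, if_false]
      exact ⟨this.2.2.1, this.2.2.2⟩
    by_cases h' : m' = m
    · subst h'
      simp only [h, if_false, if_pos]
      omega
    · simp only [h, show m' + 1 ≠ m + 1 by omega, if_false]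
      exact ⟨height_succ_le, height_le_height_succ_add_one hcol⟩
  · split_ifs with h
    · exact le_toggleDiag_iff hcol (h ▸ hij) hk
    · rw [toggleDiag_of_ne (by omega)]
      exact le_iff_lt_height hrow hcol hij

lemma height_toggleDiag_of_ne (hT : T ∈ PlanePartitions a b c) {m' : ℕ} (hm' : m' ≠ m + 1)
    (hm'ab : m' ≤ a + b) : height (toggleDiag T m) m' = height T m' := by
  obtain ⟨hrow, hcol⟩ := mem_iff.1 hT
  obtain ⟨hrow', hcol'⟩ := mem_iff.1 (toggleDiag_mem (m := m) hT)
  funext k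
  refine height_eq_of_levels hrow' hcol' hm'ab (le_height_add hcol) (height_add_le hcol hm'ab)
    height_le fun i j hij => ?_
  rw [toggleDiag_of_ne (by omega)]
  exact le_iff_lt_height hrow hcol hij

lemma height_toggleDiag_self (hT : T ∈ PlanePartitions a b c) (hm : m + 2 ≤ a + b)
    (hk : k ∈ Icc 1 c) : height (toggleDiag T m) (m + 1) k =
      toggle c (height T m) (height T (m + 1)) (height T (m + 2)) k := by
  obtain ⟨hrow, hcol⟩ := mem_iff.1 hT
  obtain ⟨hrow', hcol'⟩ := mem_iff.1 (toggleDiag_mem (m := m) hT)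
  have := (between_height (m := m) hcol).between_toggle (height_antitone.antitoneOn _)
    (height_antitone.antitoneOn _) k hk
  have := le_height_add (m := m) (k := k) hcol
  have := height_add_le (m := m + 2) (k := k) hcol hm
  have := height_le (T := T) (m := m) (k := k)
  exact height_eq_of_levels hrow' hcol' (by omega) (by omega) (by omega) (by omega)
    fun i j hij => le_toggleDiag_iff hcol hij hk

lemma toggleDiag_toggleDiag (hT : T ∈ PlanePartitions a b c) (hm : m + 2 ≤ a + b) :
    toggleDiag (toggleDiag T m) m = T := by
  obtain ⟨hrow, hcol⟩ := mem_iff.1 hT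
  obtain ⟨-, hcol'⟩ := mem_iff.1 (toggleDiag_mem (m := m) hT)
  funext i j
  by_cases hd : (j : ℕ) + a = i + (m + 1)
  · refine Fin.ext <| (Fin.val_eq_card_filter_le _).trans <|
      (congrArg card (filter_congr fun k hk => ?_)).trans (Fin.val_eq_card_filter_le _).symm
    rw [le_toggleDiag_iff hcol' hd hk, le_iff_lt_height hrow hcol hd,
      height_toggleDiag_of_ne hT (by omega) (by omega),
      height_toggleDiag_of_ne hT (by omega) hm,
      (between_height hcol).toggle_toggle (height_antitone.antitoneOn _)
        (height_antitone.antitoneOn _) (fun k hk => height_toggleDiag_self hT hm hk) hk]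
  · rw [toggleDiag_of_ne hd, toggleDiag_of_ne hd]

end ToggleDiag

section FlatSteps

variable {a b c : ℕ} {T : Fin a → Fin b → Fin (c + 1)} {m : ℕ}

def flatCount (T : Fin a → Fin b → Fin (c + 1)) (m : ℕ) : ℕ :=
  #{k ∈ Icc 1 c | height T m k = height T (m + 1) k}

lemma flatCount_toggleDiag (hT : T ∈ PlanePartitions a b c) (hm : m + 2 ≤ a + b) :
    flatCount (toggleDiag T m) m = flatCount T (m + 1) := by
  have hcol := (mem_iff.1 hT).2
  calc flatCount (toggleDiag T m) m
      = #{k ∈ Icc 1 c | height T m k =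
          toggle c (height T m) (height T (m + 1)) (height T (m + 2)) k} := by
        rw [flatCount, height_toggleDiag_of_ne hT (by omega) (by omega)]
        exact congrArg card (filter_congr fun k hk => by rw [height_toggleDiag_self hT hm hk])
    _ = flatCount T (m + 1) :=
        (between_height hcol).card_filter_eq_toggle (height_antitone.antitoneOn _)
          (height_antitone.antitoneOn _)

lemma sum_flatCount_succ (hm : m + 2 ≤ a + b) :
    ∑ T ∈ PlanePartitions a b c, flatCount T (m + 1) =
      ∑ T ∈ PlanePartitions a b c, flatCount T m :=
  sum_nbij' (toggleDiag · m) (toggleDiag · m) (fun _ => toggleDiag_mem) (fun _ => toggleDiag_mem)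
    (fun _ hT => toggleDiag_toggleDiag hT hm) (fun _ hT => toggleDiag_toggleDiag hT hm)
    (fun _ hT => (flatCount_toggleDiag hT hm).symm)

lemma sum_flatCount_eq_sum_flatCount_zero (hm : m < a + b) :
    ∑ T ∈ PlanePartitions a b c, flatCount T m =
      ∑ T ∈ PlanePartitions a b c, flatCount T 0 := by
  induction m with
  | zero => rfl
  | succ m ih => rw [sum_flatCount_succ (by omega), ih (by omega)]

lemma sum_range_flatCount (hcol : Antitone T) :
    ∑ m ∈ range (a + b), flatCount T m = b * c := by
  have hflat (k : ℕ) : #{m ∈ range (a + b) | height T m k = height T (m + 1) k} = b := by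
    have := card_filter_range_eq_apply_succ_add
      (fun m => ⟨height_succ_le, height_le_height_succ_add_one (m := m) (k := k) hcol⟩) (a + b)
    rw [height_zero, height_eq_zero le_rfl] at this
    omega
  simp only [flatCount, card_filter]
  rw [sum_comm]
  simp only [← card_filter, hflat, sum_const, Nat.card_Icc, Nat.add_sub_cancel, smul_eq_mul]
  exact Nat.mul_comm c b

lemma val_corner_eq_flatCount_zero (hT : T ∈ PlanePartitions a b c) (ha : 0 < a) (hb : 0 < b) :
    (T ⟨a - 1, by omega⟩ ⟨0, hb⟩ : ℕ) = flatCount T 0 := by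
  obtain ⟨hrow, hcol⟩ := mem_iff.1 hT
  refine (Fin.val_eq_card_filter_le _).trans (congrArg card (filter_congr fun k _ => ?_))
  rw [le_iff_lt_height hrow hcol (m := 1) (by simp only; omega), height_zero]
  simp only [Nat.zero_add]
  have := height_le (T := T) (m := 1) (k := k)
  omega

lemma add_mul_sum_corner (ha : 0 < a) (hb : 0 < b) :
    (a + b) * ∑ T ∈ PlanePartitions a b c, (T ⟨a - 1, by omega⟩ ⟨0, hb⟩ : ℕ) =
      b * c * #(PlanePartitions a b c) := by
  calc (a + b) * ∑ T ∈ PlanePartitions a b c, (T ⟨a - 1, by omega⟩ ⟨0, hb⟩ : ℕ)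
      = ∑ m ∈ range (a + b), ∑ T ∈ PlanePartitions a b c, flatCount T m := by
        rw [sum_congr rfl fun m hm => sum_flatCount_eq_sum_flatCount_zero (mem_range.1 hm),
          sum_const, card_range, smul_eq_mul,
          sum_congr rfl fun T hT => val_corner_eq_flatCount_zero hT ha hb]
    _ = ∑ T ∈ PlanePartitions a b c, b * c := by
        rw [sum_comm]
        exact sum_congr rfl fun T hT => sum_range_flatCount (mem_iff.1 hT).2
    _ = b * c * #(PlanePartitions a b c) := by rw [sum_const, smul_eq_mul, mul_comm]

end FlatSteps

end PlanePartitions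

theorem expected_bottom_left_corner_general (a b c : ℕ) (ha : 0 < a) (hb : 0 < b) :
    E a b c a 1 = (b : ℚ) * c / ((a : ℚ) + b) := by
  have hentry (T : Fin a → Fin b → Fin (c + 1)) :
      entry a b c T a 1 = (T ⟨a - 1, by omega⟩ ⟨0, hb⟩ : ℕ) :=
    dif_pos ⟨ha, le_rfl, le_rfl, hb⟩
  have hcard : (#(PlanePartitions a b c) : ℚ) ≠ 0 :=
    Nat.cast_ne_zero.2 (ne_of_gt (card_pos.2 ⟨fun _ _ => 0, by simp [PlanePartitions]⟩))
  rw [E, div_eq_div_iff hcard (by positivity)]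
  simp only [hentry]
  have key := congrArg (Nat.cast : ℕ → ℚ) (PlanePartitions.add_mul_sum_corner (c := c) ha hb)
  push_cast at key
  linarith

theorem expected_bottom_left_corner (a b c : ℕ) (ha : 0 < a) (hb : 0 < b) (hc : 0 < c) :
    E a b c a 1 = (b : ℚ) * c / ((a : ℚ) + b) :=
  expected_bottom_left_corner_general a b c ha hb
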